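/- arXiv:2109.04033 — 6 statements merged into one kernel-verified Lean document; each statement's English description precedes it below -/
import Mathlib

section
/- Let T : ℝ^S → ℝ^S be the affine Bellman operator T(x) = R + γ·P·x. Then T is a γ-contraction in the D-weighted norm: for all x, y ∈ ℝ^S, ‖T(x) − T(y)‖_D ≤ γ‖x − y‖_D. -/
/-! The squared `D`-norm is the stationary average of `x²`. Jensen's inequality for each row of
`P` gives `(P x)² ≤ P (x²)` pointwise, and averaging against the stationary `d` turns `P (x²)`
back into `x²`, so `‖P x‖_D ≤ ‖x‖_D`; the factor `γ` then comes out by homogeneity and the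
constant `R` cancels. -/

open Matrix

/-- The `D`-weighted norm `‖x‖_D = √(xᵀ D x)` with `D = diag d`. -/
noncomputable def wNorm {S : Type*} [Fintype S] [DecidableEq S]
    (d : S → ℝ) (x : S → ℝ) : ℝ :=
  Real.sqrt (x ⬝ᵥ (Matrix.diagonal d *ᵥ x))

section WeightedNorm

variable {S : Type*} [Fintype S] [DecidableEq S]

lemma wNorm_eq_sqrt_sum (d x : S → ℝ) : wNorm d x = √(∑ i, d i * x i ^ 2) := by
  unfold wNorm
  congr 1
  simp only [dotProduct, mulVec_diagonal]
  exact Finset.sum_congr rfl fun i _ => by ring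

lemma wNorm_smul (d : S → ℝ) (c : ℝ) (x : S → ℝ) : wNorm d (c • x) = |c| * wNorm d x := by
  have hsum : ∑ i, d i * (c • x) i ^ 2 = c ^ 2 * ∑ i, d i * x i ^ 2 := by
    rw [Finset.mul_sum]
    exact Finset.sum_congr rfl fun i _ => by simp only [Pi.smul_apply, smul_eq_mul]; ring
  rw [wNorm_eq_sqrt_sum, wNorm_eq_sqrt_sum, hsum, Real.sqrt_mul (sq_nonneg c), Real.sqrt_sq_eq_abs]

end WeightedNorm

section Stochastic

variable {S : Type*} [Fintype S] {P : Matrix S S ℝ}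

lemma sq_mulVec_le_mulVec_sq (hP0 : ∀ i j, 0 ≤ P i j) (hP1 : ∀ i, ∑ j, P i j = 1)
    (z : S → ℝ) (i : S) : (P *ᵥ z) i ^ 2 ≤ ∑ j, P i j * z j ^ 2 := by
  simpa only [mulVec, dotProduct, smul_eq_mul] using
    (even_two.convexOn_pow (𝕜 := ℝ)).map_sum_le (fun j _ => hP0 i j) (hP1 i) (fun j _ => Set.mem_univ (z j))

lemma sum_mul_sq_mulVec_le (hP0 : ∀ i j, 0 ≤ P i j) (hP1 : ∀ i, ∑ j, P i j = 1)
    {d : S → ℝ} (hd : ∀ s, 0 ≤ d s) (hstat : ∀ s', ∑ s, d s * P s s' = d s') (z : S → ℝ) :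
    ∑ i, d i * (P *ᵥ z) i ^ 2 ≤ ∑ j, d j * z j ^ 2 :=
  calc ∑ i, d i * (P *ᵥ z) i ^ 2
      ≤ ∑ i, d i * ∑ j, P i j * z j ^ 2 := Finset.sum_le_sum fun i _ =>
        mul_le_mul_of_nonneg_left (sq_mulVec_le_mulVec_sq hP0 hP1 z i) (hd i)
    _ = ∑ j, (∑ i, d i * P i j) * z j ^ 2 := by
        simp_rw [Finset.mul_sum, Finset.sum_mul, mul_assoc]
        exact Finset.sum_comm
    _ = ∑ j, d j * z j ^ 2 := by simp only [hstat]

lemma wNorm_mulVec_le [DecidableEq S] (hP0 : ∀ i j, 0 ≤ P i j) (hP1 : ∀ i, ∑ j, P i j = 1)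
    {d : S → ℝ} (hd : ∀ s, 0 ≤ d s) (hstat : ∀ s', ∑ s, d s * P s s' = d s') (z : S → ℝ) :
    wNorm d (P *ᵥ z) ≤ wNorm d z := by
  rw [wNorm_eq_sqrt_sum, wNorm_eq_sqrt_sum]
  exact Real.sqrt_le_sqrt (sum_mul_sq_mulVec_le hP0 hP1 hd hstat z)

end Stochastic

theorem stmt_0_general {S : Type*} [Fintype S] [DecidableEq S]
    (P : Matrix S S ℝ)
    (hP0 : ∀ i j, 0 ≤ P i j) (hP1 : ∀ i, ∑ j, P i j = 1)
    (d : S → ℝ) (hd : ∀ s, 0 < d s)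
    (hstat : ∀ s', ∑ s, d s * P s s' = d s')
    (γ : ℝ) (hγ0 : 0 < γ) (R : S → ℝ)
    (T : (S → ℝ) → (S → ℝ)) (hT : ∀ x, T x = R + γ • (P *ᵥ x)) :
    ∀ x y : S → ℝ, wNorm d (T x - T y) ≤ γ * wNorm d (x - y) := by
  intro x y
  have hdiff : T x - T y = γ • (P *ᵥ (x - y)) := by
    rw [hT x, hT y, mulVec_sub, smul_sub, add_sub_add_left_eq_sub]
  rw [hdiff, wNorm_smul, abs_of_pos hγ0]
  exact mul_le_mul_of_nonneg_left (wNorm_mulVec_le hP0 hP1 (fun s => (hd s).le) hstat _) hγ0.le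

/-- The affine Bellman operator `T x = R + γ • P x` is a `γ`-contraction in the
`D`-weighted norm, where `d` is a positive stationary distribution of the
row-stochastic matrix `P`. -/
theorem stmt_0 {S : Type*} [Fintype S] [DecidableEq S] [Nonempty S]
    (P : Matrix S S ℝ)
    (hP0 : ∀ i j, 0 ≤ P i j) (hP1 : ∀ i, ∑ j, P i j = 1)
    (d : S → ℝ) (hd : ∀ s, 0 < d s)
    (hstat : ∀ s', ∑ s, d s * P s s' = d s')
    (γ : ℝ) (hγ0 : 0 < γ) (hγ1 : γ < 1) (R : S → ℝ)
    (T : (S → ℝ) → (S → ℝ)) (hT : ∀ x, T x = R + γ • (P *ᵥ x)) :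
    ∀ x y : S → ℝ, wNorm d (T x - T y) ≤ γ * wNorm d (x - y) :=
  stmt_0_general P hP0 hP1 d hd hstat γ hγ0 R T hT
end

section
/- The composite projected Bellman operator x ↦ Π(R + γ·P·x) is a γ-contraction in the D-weighted norm: for all x, y ∈ ℝ^S, ‖Π(R + γPx) − Π(R + γPy)‖_D ≤ γ‖x − y‖_D. -/
/-!
Both factors of `x ↦ Π (R + γ P x)` are nonexpansive in `‖·‖_D`: `Π` is a `D`-orthogonal projection,
so `‖v‖_D² = ‖Π v‖_D² + ‖v - Π v‖_D²`; and `P` is nonexpansive because Jensen's inequality gives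
`(P z)ᵢ² ≤ ∑ⱼ Pᵢⱼ zⱼ²` and stationarity of `d` turns `∑ᵢ dᵢ ∑ⱼ Pᵢⱼ zⱼ²` back into `∑ⱼ dⱼ zⱼ²`.
The affine term `R` cancels in the difference, leaving the factor `γ`.
-/

open Matrix

theorem Matrix.mulVec_injective_of_rank_eq_card {K m n : Type*} [Field K] [Fintype m] [Fintype n]
    {A : Matrix m n K} (hA : A.rank = Fintype.card n) : Function.Injective A.mulVec := by
  rw [mulVec_injective_iff, linearIndependent_iff_card_eq_finrank_span, ← hA,
    rank_eq_finrank_span_cols]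
  rfl

section WeightedProjection
variable {S n R : Type*} [Fintype S] [Fintype n] [DecidableEq n] [CommRing R]

noncomputable def weightedProj (Φ : Matrix S n R) (W : Matrix S S R) : Matrix S S R :=
  Φ * (Φᵀ * W * Φ)⁻¹ * Φᵀ * W

lemma weightedProj_transpose_mul {Φ : Matrix S n R} {W : Matrix S S R} (hW : Wᵀ = W) :
    (weightedProj Φ W)ᵀ * W = W * weightedProj Φ W := by
  simp only [weightedProj, transpose_mul, transpose_transpose, hW, transpose_nonsing_inv,
    Matrix.mul_assoc]

lemma isIdempotentElem_weightedProj {Φ : Matrix S n R} {W : Matrix S S R}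
    (h : IsUnit (Φᵀ * W * Φ)) : IsIdempotentElem (weightedProj Φ W) := by
  have hinv : (Φᵀ * W * Φ)⁻¹ * (Φᵀ * W * Φ) = 1 :=
    nonsing_inv_mul _ ((isUnit_iff_isUnit_det _).mp h)
  calc weightedProj Φ W * weightedProj Φ W
      = Φ * ((Φᵀ * W * Φ)⁻¹ * (Φᵀ * W * Φ)) * (Φᵀ * W * Φ)⁻¹ * Φᵀ * W := by
        simp only [weightedProj, Matrix.mul_assoc]
    _ = weightedProj Φ W := by rw [hinv, Matrix.mul_one, weightedProj]

end WeightedProjection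

lemma isUnit_transpose_mul_diagonal_mul {S n : Type*} [Fintype S] [DecidableEq S] [Fintype n]
    [DecidableEq n] {d : S → ℝ} (hd : ∀ s, 0 < d s) {Φ : Matrix S n ℝ}
    (hΦ : Function.Injective Φ.mulVec) : IsUnit (Φᵀ * diagonal d * Φ) := by
  simpa only [conjTranspose_eq_transpose_of_trivial] using
    ((posDef_diagonal_iff.mpr hd).conjTranspose_mul_mul_same hΦ).isUnit

section WeightedNorm
variable {S : Type*} [Fintype S] [DecidableEq S]

lemma dotProduct_diagonal_mulVec_self (d x : S → ℝ) :
    x ⬝ᵥ (diagonal d *ᵥ x) = ∑ i, d i * x i ^ 2 := by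
  simp only [dotProduct, mulVec_diagonal]
  exact Finset.sum_congr rfl fun i _ => by ring

lemma wNorm_mulVec_le_of_stationary {d : S → ℝ} (hd : ∀ s, 0 ≤ d s) {P : Matrix S S ℝ}
    (hP0 : ∀ i j, 0 ≤ P i j) (hP1 : ∀ i, ∑ j, P i j = 1)
    (hstat : ∀ s', ∑ s, d s * P s s' = d s') (z : S → ℝ) :
    wNorm d (P *ᵥ z) ≤ wNorm d z := by
  refine Real.sqrt_le_sqrt ?_
  -- Jensen for `t ↦ t ^ 2` along each row of `P`
  have jensen (i : S) : (P *ᵥ z) i ^ 2 ≤ ∑ j, P i j * z j ^ 2 :=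
    even_two.convexOn_pow.map_sum_le (fun j _ => hP0 i j) (hP1 i) (fun j _ => Set.mem_univ (z j))
  rw [dotProduct_diagonal_mulVec_self, dotProduct_diagonal_mulVec_self]
  calc ∑ i, d i * (P *ᵥ z) i ^ 2 ≤ ∑ i, d i * ∑ j, P i j * z j ^ 2 :=
        Finset.sum_le_sum fun i _ => mul_le_mul_of_nonneg_left (jensen i) (hd i)
    _ = ∑ j, (∑ i, d i * P i j) * z j ^ 2 := by
        simp only [Finset.mul_sum, Finset.sum_mul, mul_assoc]
        exact Finset.sum_comm
    _ = ∑ j, d j * z j ^ 2 := by simp only [hstat]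

lemma wNorm_mulVec_le_of_isIdempotentElem {d : S → ℝ} (hd : ∀ s, 0 ≤ d s)
    {Q : Matrix S S ℝ} (hQ : IsIdempotentElem Q) (hadj : Qᵀ * diagonal d = diagonal d * Q)
    (v : S → ℝ) : wNorm d (Q *ᵥ v) ≤ wNorm d v := by
  refine Real.sqrt_le_sqrt ?_
  set r := v - Q *ᵥ v
  have hr : Q *ᵥ r = 0 := by simp only [r, mulVec_sub, mulVec_mulVec, hQ.eq, sub_self]
  -- both cross terms of `(Q v + r)ᵀ D (Q v + r)` vanish, since `Qᵀ D = D Q` and `Q r = 0`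
  have cross₁ : (Q *ᵥ v) ⬝ᵥ (diagonal d *ᵥ r) = 0 := by
    rw [dotProduct_comm, ← dotProduct_transpose_mulVec, mulVec_mulVec, hadj, ← mulVec_mulVec, hr,
      mulVec_zero, dotProduct_zero]
  have cross₂ : r ⬝ᵥ (diagonal d *ᵥ (Q *ᵥ v)) = 0 := by
    rw [mulVec_mulVec, ← hadj, ← mulVec_mulVec, dotProduct_transpose_mulVec, hr, dotProduct_zero]
  have hr_nonneg : 0 ≤ r ⬝ᵥ (diagonal d *ᵥ r) := by
    rw [dotProduct_diagonal_mulVec_self]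
    exact Finset.sum_nonneg fun i _ => mul_nonneg (hd i) (sq_nonneg _)
  calc (Q *ᵥ v) ⬝ᵥ (diagonal d *ᵥ (Q *ᵥ v))
      ≤ (Q *ᵥ v) ⬝ᵥ (diagonal d *ᵥ (Q *ᵥ v)) + r ⬝ᵥ (diagonal d *ᵥ r) :=
        le_add_of_nonneg_right hr_nonneg
    _ = (Q *ᵥ v + r) ⬝ᵥ (diagonal d *ᵥ (Q *ᵥ v + r)) := by
        rw [mulVec_add, add_dotProduct, dotProduct_add, dotProduct_add, cross₁, cross₂]
        ring
    _ = v ⬝ᵥ (diagonal d *ᵥ v) := by rw [add_sub_cancel]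

end WeightedNorm

theorem stmt_3_general {S : Type*} [Fintype S] [DecidableEq S]
    (q : ℕ)
    (P : Matrix S S ℝ)
    (hP0 : ∀ i j, 0 ≤ P i j) (hP1 : ∀ i, ∑ j, P i j = 1)
    (d : S → ℝ) (hd : ∀ s, 0 < d s)
    (hstat : ∀ s', ∑ s, d s * P s s' = d s')
    (γ : ℝ) (hγ0 : 0 < γ) (R : S → ℝ)
    (Φ : Matrix S (Fin q) ℝ) (hΦ : Φ.rank = q)
    (Proj : Matrix S S ℝ)
    (hProj : Proj = Φ * (Φᵀ * Matrix.diagonal d * Φ)⁻¹ * Φᵀ * Matrix.diagonal d) :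
    ∀ x y : S → ℝ,
      wNorm d (Proj *ᵥ (R + γ • (P *ᵥ x)) - Proj *ᵥ (R + γ • (P *ᵥ y)))
        ≤ γ * wNorm d (x - y) := by
  intro x y
  have hd' : ∀ s, 0 ≤ d s := fun s => (hd s).le
  have hΦinj : Function.Injective Φ.mulVec :=
    mulVec_injective_of_rank_eq_card (by rwa [Fintype.card_fin])
  have hdiff : Proj *ᵥ (R + γ • (P *ᵥ x)) - Proj *ᵥ (R + γ • (P *ᵥ y))
      = γ • (Proj *ᵥ (P *ᵥ (x - y))) := by
    rw [← mulVec_sub, add_sub_add_left_eq_sub, ← smul_sub, ← mulVec_sub, mulVec_smul]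
  rw [hdiff, wNorm_smul, abs_of_pos hγ0]
  gcongr
  subst hProj
  calc wNorm d (weightedProj Φ (diagonal d) *ᵥ (P *ᵥ (x - y))) ≤ wNorm d (P *ᵥ (x - y)) :=
        wNorm_mulVec_le_of_isIdempotentElem hd'
          (isIdempotentElem_weightedProj (isUnit_transpose_mul_diagonal_mul hd hΦinj))
          (weightedProj_transpose_mul (diagonal_transpose d)) _
    _ ≤ wNorm d (x - y) := wNorm_mulVec_le_of_stationary hd' hP0 hP1 hstat _

/-- The projected Bellman operator `x ↦ Π (R + γ P x)` is a `γ`-contraction in the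
`D`-weighted norm, where `Π = Φ (Φᵀ D Φ)⁻¹ Φᵀ D`. -/
theorem stmt_3 {S : Type*} [Fintype S] [DecidableEq S] [Nonempty S]
    (q : ℕ) (hq : 0 < q)
    (P : Matrix S S ℝ)
    (hP0 : ∀ i j, 0 ≤ P i j) (hP1 : ∀ i, ∑ j, P i j = 1)
    (d : S → ℝ) (hd : ∀ s, 0 < d s)
    (hstat : ∀ s', ∑ s, d s * P s s' = d s')
    (γ : ℝ) (hγ0 : 0 < γ) (hγ1 : γ < 1) (R : S → ℝ)
    (Φ : Matrix S (Fin q) ℝ) (hΦ : Φ.rank = q)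
    (Proj : Matrix S S ℝ)
    (hProj : Proj = Φ * (Φᵀ * Matrix.diagonal d * Φ)⁻¹ * Φᵀ * Matrix.diagonal d) :
    ∀ x y : S → ℝ,
      wNorm d (Proj *ᵥ (R + γ • (P *ᵥ x)) - Proj *ᵥ (R + γ • (P *ᵥ y)))
        ≤ γ * wNorm d (x - y) :=
  stmt_3_general q P hP0 hP1 d hd hstat γ hγ0 R Φ hΦ Proj hProj
end

section
/- Assume A := Φᵀ D (γP − I) Φ is nonsingular and set θ* := −A⁻¹ Φᵀ D R. Consider the regularized Lagrangian L(θ,λ) := λᵀ Φᵀ D (R + γPΦθ − Φθ) − (1/2) λᵀ Φᵀ D Φ λ. Then the pair (θ,λ) ∈ ℝ^q × ℝ^q satisfies the stationarity conditions ∇_θ L(θ,λ) = (γPΦ − Φ)ᵀ D Φ λ = 0 and ∇_λ L(θ,λ) = Φᵀ D (R + γPΦθ − Φθ − Φλ) = 0 if and only if θ = θ* and λ = 0; i.e., the saddle point of L exists and is unique, given by (θ*, 0). -/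
open Matrix

/-! Writing `A = Φᵀ D (γP − I) Φ`, the symmetry of `D` turns the θ-gradient into `Aᵀ λ`, and the
λ-gradient is `A θ + Φᵀ D R − Φᵀ D Φ λ`. Since `Aᵀ` is invertible the first condition forces
`λ = 0`, and the second then reads `A θ = −Φᵀ D R`. -/

namespace Matrix

variable {m n α : Type*} [Fintype m] [DecidableEq m] [CommRing α]

theorem mulVec_eq_iff_eq_inv_mulVec [Fintype n] [DecidableEq n] {A : Matrix n n α}
    (hA : IsUnit A) {x y : n → α} : A *ᵥ x = y ↔ x = A⁻¹ *ᵥ y := by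
  have hdet : IsUnit A.det := (isUnit_iff_isUnit_det A).mp hA
  constructor
  · rintro rfl
    rw [mulVec_mulVec, nonsing_inv_mul _ hdet, one_mulVec]
  · rintro rfl
    rw [mulVec_mulVec, mul_nonsing_inv _ hdet, one_mulVec]

theorem transpose_smul_mul_sub_mul_mul {D : Matrix m m α} (hD : Dᵀ = D)
    (P : Matrix m m α) (γ : α) (Φ : Matrix m n α) :
    (γ • (P * Φ) - Φ)ᵀ * D * Φ = (Φᵀ * D * (γ • P - 1) * Φ)ᵀ := by
  rw [show γ • (P * Φ) - Φ = (γ • P - 1) * Φ by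
    rw [Matrix.sub_mul, Matrix.smul_mul, Matrix.one_mul]]
  simp only [transpose_mul, transpose_transpose, hD, Matrix.mul_assoc]

theorem mulVec_add_smul_mulVec_sub_sub [Fintype n] (M : Matrix n m α) (P : Matrix m m α) (γ : α)
    (Φ : Matrix m n α) (R : m → α) (θ lam : n → α) :
    M *ᵥ (R + γ • (P *ᵥ (Φ *ᵥ θ)) - Φ *ᵥ θ - Φ *ᵥ lam)
      = (M * (γ • P - 1) * Φ) *ᵥ θ + M *ᵥ R - (M * Φ) *ᵥ lam := by
  have hfactor : γ • (P *ᵥ (Φ *ᵥ θ)) - Φ *ᵥ θ = ((γ • P - 1) * Φ) *ᵥ θ := by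
    rw [Matrix.sub_mul, Matrix.smul_mul, Matrix.one_mul, sub_mulVec, smul_mulVec, mulVec_mulVec]
  rw [add_sub_assoc R, hfactor, mulVec_sub, mulVec_add, mulVec_mulVec, mulVec_mulVec,
    ← Matrix.mul_assoc, add_comm (M *ᵥ R)]

end Matrix

theorem stmt_9_general {S : Type*} [Fintype S] [DecidableEq S]
    (q : ℕ)
    (P : Matrix S S ℝ) (γ : ℝ) (R : S → ℝ)
    (d : S → ℝ)
    (Φ : Matrix S (Fin q) ℝ)
    (A : Matrix (Fin q) (Fin q) ℝ)
    (hA : A = Φᵀ * Matrix.diagonal d * (γ • P - 1) * Φ)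
    (hAunit : IsUnit A)
    (θs : Fin q → ℝ)
    (hθs : θs = -(A⁻¹ *ᵥ ((Φᵀ * Matrix.diagonal d) *ᵥ R))) :
    ∀ θ lam : Fin q → ℝ,
      (((γ • (P * Φ) - Φ)ᵀ * Matrix.diagonal d * Φ) *ᵥ lam = 0 ∧
       (Φᵀ * Matrix.diagonal d) *ᵥ
          (R + γ • (P *ᵥ (Φ *ᵥ θ)) - Φ *ᵥ θ - Φ *ᵥ lam) = 0) ↔
      (θ = θs ∧ lam = 0) := by
  intro θ lam
  rw [transpose_smul_mul_sub_mul_mul (diagonal_transpose d), mulVec_add_smul_mulVec_sub_sub,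
    ← hA, mulVec_eq_iff_eq_inv_mulVec ((isUnit_transpose A).mpr hAunit), mulVec_zero, and_comm]
  refine and_congr_left fun hlam => ?_
  rw [hlam, mulVec_zero, sub_zero, add_eq_zero_iff_eq_neg, mulVec_eq_iff_eq_inv_mulVec hAunit,
    mulVec_neg, hθs]

/-- For the regularized Lagrangian
`L(θ,λ) = λᵀ Φᵀ D (R + γPΦθ − Φθ) − (1/2) λᵀ Φᵀ D Φ λ`, the stationarity conditions
`∇_θ L = (γPΦ − Φ)ᵀ D Φ λ = 0` and `∇_λ L = Φᵀ D (R + γPΦθ − Φθ − Φλ) = 0` hold iff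
`θ = θ* := −A⁻¹ Φᵀ D R` and `λ = 0`; i.e. the saddle point of `L` is unique, `(θ*, 0)`. -/
theorem stmt_9 {S : Type*} [Fintype S] [DecidableEq S] [Nonempty S]
    (q : ℕ) (hq : 0 < q)
    (P : Matrix S S ℝ) (γ : ℝ) (R : S → ℝ)
    (d : S → ℝ) (hd : ∀ s, 0 < d s)
    (Φ : Matrix S (Fin q) ℝ) (hΦ : Φ.rank = q)
    (A : Matrix (Fin q) (Fin q) ℝ)
    (hA : A = Φᵀ * Matrix.diagonal d * (γ • P - 1) * Φ)
    (hAunit : IsUnit A)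
    (θs : Fin q → ℝ)
    (hθs : θs = -(A⁻¹ *ᵥ ((Φᵀ * Matrix.diagonal d) *ᵥ R))) :
    ∀ θ lam : Fin q → ℝ,
      (((γ • (P * Φ) - Φ)ᵀ * Matrix.diagonal d * Φ) *ᵥ lam = 0 ∧
       (Φᵀ * Matrix.diagonal d) *ᵥ
          (R + γ • (P *ᵥ (Φ *ᵥ θ)) - Φ *ᵥ θ - Φ *ᵥ lam) = 0) ↔
      (θ = θs ∧ lam = 0) :=
  stmt_9_general q P γ R d Φ A hA hAunit θs hθs
end

section
/- Fix λ ∈ ℝ^q and consider the function θ ↦ L(θ,λ) := λᵀ Φᵀ D (R + γPΦθ − Φθ) − (1/2) λᵀ Φᵀ D Φ λ on ℝ^q. If Φᵀ (γP − I)ᵀ D Φ λ ≠ 0, then this function is unbounded below (its infimum over θ ∈ ℝ^q is −∞). If Φᵀ (γP − I)ᵀ D Φ λ = 0, then L(θ,λ) = λᵀ Φᵀ D R − (1/2) λᵀ Φᵀ D Φ λ for every θ ∈ ℝ^q. Consequently, the dual problem max_λ min_θ L(θ,λ) is: maximize λᵀ Φᵀ D R − (1/2) λᵀ Φᵀ D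 Φ λ subject to Φᵀ (γP − I)ᵀ D Φ λ = 0. -/
open Matrix

/-! The Lagrangian is affine in `θ`, with linear part `θ ↦ (Φᵀ (γP − I)ᵀ D Φ λ) ⬝ᵥ θ` (move
`Φᵀ D (γP − I) Φ` across the dot product, using `Dᵀ = D`). An affine function on `Kⁿ` is constant
when its linear part vanishes and is unbounded below otherwise, by going far along `−v`. -/

section

variable {ι K : Type*} [Fintype ι]

theorem exists_dotProduct_add_lt [Field K] [LinearOrder K] [IsStrictOrderedRing K]
    {v : ι → K} (hv : v ≠ 0) (k c : K) : ∃ θ : ι → K, v ⬝ᵥ θ + k < c := by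
  have hvv : 0 < v ⬝ᵥ v :=
    lt_of_le_of_ne (Finset.sum_nonneg fun i _ => mul_self_nonneg (v i))
      (Ne.symm (dotProduct_self_eq_zero.not.mpr hv))
  refine ⟨((c - k - 1) / (v ⬝ᵥ v)) • v, ?_⟩
  rw [dotProduct_smul, smul_eq_mul, div_mul_cancel₀ _ hvv.ne']
  linarith

theorem dotProduct_diagonal_mulVec_eq_mulVec_dotProduct [CommRing K] {S n : Type*} [Fintype S]
    [DecidableEq S] [Fintype n] (A : Matrix S S K) (d : S → K) (Φ : Matrix S n K)
    (θ lam : n → K) :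
    lam ⬝ᵥ ((Φᵀ * diagonal d) *ᵥ (A *ᵥ (Φ *ᵥ θ))) = ((Φᵀ * Aᵀ * diagonal d * Φ) *ᵥ lam) ⬝ᵥ θ := by
  rw [mulVec_mulVec, mulVec_mulVec, dotProduct_mulVec, ← mulVec_transpose]
  simp only [transpose_mul, transpose_transpose, diagonal_transpose, Matrix.mul_assoc]

end

theorem stmt_10_general {S : Type*} [Fintype S] [DecidableEq S]
    (q : ℕ)
    (P : Matrix S S ℝ) (γ : ℝ) (R : S → ℝ)
    (d : S → ℝ)
    (Φ : Matrix S (Fin q) ℝ)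
    (L : (Fin q → ℝ) → (Fin q → ℝ) → ℝ)
    (hL : ∀ θ lam, L θ lam =
      lam ⬝ᵥ ((Φᵀ * Matrix.diagonal d) *ᵥ (R + γ • (P *ᵥ (Φ *ᵥ θ)) - Φ *ᵥ θ)) -
      (1 / 2) * (lam ⬝ᵥ ((Φᵀ * Matrix.diagonal d * Φ) *ᵥ lam))) :
    ∀ lam : Fin q → ℝ,
      ((Φᵀ * (γ • P - 1)ᵀ * Matrix.diagonal d * Φ) *ᵥ lam ≠ 0 →
        ∀ c : ℝ, ∃ θ : Fin q → ℝ, L θ lam < c) ∧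
      ((Φᵀ * (γ • P - 1)ᵀ * Matrix.diagonal d * Φ) *ᵥ lam = 0 →
        ∀ θ : Fin q → ℝ,
          L θ lam = lam ⬝ᵥ ((Φᵀ * Matrix.diagonal d) *ᵥ R) -
            (1 / 2) * (lam ⬝ᵥ ((Φᵀ * Matrix.diagonal d * Φ) *ᵥ lam))) := by
  intro lam
  set v := (Φᵀ * (γ • P - 1)ᵀ * Matrix.diagonal d * Φ) *ᵥ lam
  set k := lam ⬝ᵥ ((Φᵀ * Matrix.diagonal d) *ᵥ R) -
      (1 / 2) * (lam ⬝ᵥ ((Φᵀ * Matrix.diagonal d * Φ) *ᵥ lam))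
  have affine : ∀ θ, L θ lam = v ⬝ᵥ θ + k := fun θ => by
    have hres : R + γ • (P *ᵥ (Φ *ᵥ θ)) - Φ *ᵥ θ = R + (γ • P - 1) *ᵥ (Φ *ᵥ θ) := by
      rw [sub_mulVec, smul_mulVec, one_mulVec, add_sub_assoc]
    rw [hL, hres, mulVec_add, dotProduct_add,
      dotProduct_diagonal_mulVec_eq_mulVec_dotProduct]
    ring
  refine ⟨fun hv c => ?_, fun hv θ => ?_⟩
  · simpa only [affine] using exists_dotProduct_add_lt hv k c
  · rw [affine, hv, zero_dotProduct, zero_add]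

/-- Fix `λ` and consider `θ ↦ L(θ,λ) = λᵀ Φᵀ D (R + γPΦθ − Φθ) − (1/2) λᵀ Φᵀ D Φ λ`.
If `Φᵀ (γP − I)ᵀ D Φ λ ≠ 0`, the function is unbounded below; if
`Φᵀ (γP − I)ᵀ D Φ λ = 0`, it is constantly `λᵀ Φᵀ D R − (1/2) λᵀ Φᵀ D Φ λ`.
Hence the dual problem is to maximize `λᵀ Φᵀ D R − (1/2) λᵀ Φᵀ D Φ λ` subject to
`Φᵀ (γP − I)ᵀ D Φ λ = 0`. -/
theorem stmt_10 {S : Type*} [Fintype S] [DecidableEq S] [Nonempty S]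
    (q : ℕ) (hq : 0 < q)
    (P : Matrix S S ℝ) (γ : ℝ) (R : S → ℝ)
    (d : S → ℝ) (hd : ∀ s, 0 < d s)
    (Φ : Matrix S (Fin q) ℝ) (hΦ : Φ.rank = q)
    (L : (Fin q → ℝ) → (Fin q → ℝ) → ℝ)
    (hL : ∀ θ lam, L θ lam =
      lam ⬝ᵥ ((Φᵀ * Matrix.diagonal d) *ᵥ (R + γ • (P *ᵥ (Φ *ᵥ θ)) - Φ *ᵥ θ)) -
      (1 / 2) * (lam ⬝ᵥ ((Φᵀ * Matrix.diagonal d * Φ) *ᵥ lam))) :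
    ∀ lam : Fin q → ℝ,
      ((Φᵀ * (γ • P - 1)ᵀ * Matrix.diagonal d * Φ) *ᵥ lam ≠ 0 →
        ∀ c : ℝ, ∃ θ : Fin q → ℝ, L θ lam < c) ∧
      ((Φᵀ * (γ • P - 1)ᵀ * Matrix.diagonal d * Φ) *ᵥ lam = 0 →
        ∀ θ : Fin q → ℝ,
          L θ lam = lam ⬝ᵥ ((Φᵀ * Matrix.diagonal d) *ᵥ R) -
            (1 / 2) * (lam ⬝ᵥ ((Φᵀ * Matrix.diagonal d * Φ) *ᵥ lam))) :=
  stmt_10_general q P γ R d Φ L hL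
end

section
/- Let A be an invertible q×q real matrix, B a symmetric positive definite q×q real matrix, and σ ≥ 0 a real number. Then the matrix A + σ · B (Aᵀ)⁻¹ B is invertible. -/
/-!
Factor `A + σ B A⁻ᴴ B = B A⁻ᴴ (Aᴴ B⁻¹ A + σ B)`. The first two factors are invertible, and the
last is the sum of the positive definite congruence `Aᴴ B⁻¹ A` and the positive semidefinite
`σ B`, hence positive definite and invertible.
-/

open Matrix
open scoped ComplexOrder

namespace Matrix

variable {n : Type*} [Fintype n] [DecidableEq n]

theorem add_smul_mul_inv_mul_eq_mul_inv_mul {α R : Type*} [CommRing α] [Monoid R]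
    [DistribMulAction R α] [SMulCommClass R α α] {A B C : Matrix n n α}
    (hB : IsUnit B) (hC : IsUnit C) (r : R) :
    A + r • (B * C⁻¹ * B) = B * C⁻¹ * (C * B⁻¹ * A + r • B) := by
  have hC' : C⁻¹ * C = 1 := nonsing_inv_mul C ((isUnit_iff_isUnit_det C).mp hC)
  have hB' : B * B⁻¹ = 1 := mul_nonsing_inv B ((isUnit_iff_isUnit_det B).mp hB)
  have hcancel : B * C⁻¹ * (C * B⁻¹ * A) = A := by
    simp only [Matrix.mul_assoc, ← Matrix.mul_assoc C⁻¹, hC', Matrix.one_mul,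
      ← Matrix.mul_assoc B, hB']
  rw [Matrix.mul_add, hcancel, Matrix.mul_smul]

variable {𝕜 : Type*} [RCLike 𝕜]

theorem isUnit_add_smul_mul_inv_conjTranspose_mul {A B : Matrix n n 𝕜} (hA : IsUnit A)
    (hB : B.PosDef) {σ : ℝ} (hσ : 0 ≤ σ) : IsUnit (A + σ • (B * (Aᴴ)⁻¹ * B)) := by
  have hAH : IsUnit Aᴴ := by simpa [isUnit_iff_isUnit_det, det_conjTranspose] using hA
  have hsum : (Aᴴ * B⁻¹ * A + σ • B).PosDef :=
    (hB.inv.conjTranspose_mul_mul_same (mulVec_injective_of_isUnit hA)).add_posSemidef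
      (hB.posSemidef.smul hσ)
  rw [add_smul_mul_inv_mul_eq_mul_inv_mul hB.isUnit hAH]
  exact (hB.isUnit.mul (isUnit_nonsing_inv_iff.mpr hAH)).mul hsum.isUnit

end Matrix

theorem stmt_15_general (q : ℕ)
    (A B : Matrix (Fin q) (Fin q) ℝ)
    (hA : IsUnit A) (hBsymm : Bᵀ = B)
    (hBpos : ∀ x : Fin q → ℝ, x ≠ 0 → 0 < x ⬝ᵥ (B *ᵥ x))
    (σ : ℝ) (hσ : 0 ≤ σ) :
    IsUnit (A + σ • (B * (Aᵀ)⁻¹ * B)) := by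
  have hB : B.PosDef := .of_dotProduct_mulVec_pos hBsymm fun x hx => by simpa using hBpos x hx
  simpa using isUnit_add_smul_mul_inv_conjTranspose_mul hA hB hσ

/-- If `A` is invertible, `B` is symmetric positive definite, and `σ ≥ 0`, then
`A + σ • B (Aᵀ)⁻¹ B` is invertible. -/
theorem stmt_15 (q : ℕ) (hq : 0 < q)
    (A B : Matrix (Fin q) (Fin q) ℝ)
    (hA : IsUnit A) (hBsymm : Bᵀ = B)
    (hBpos : ∀ x : Fin q → ℝ, x ≠ 0 → 0 < x ⬝ᵥ (B *ᵥ x))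
    (σ : ℝ) (hσ : 0 ≤ σ) :
    IsUnit (A + σ • (B * (Aᵀ)⁻¹ * B)) :=
  stmt_15_general q A B hA hBsymm hBpos σ hσ
end

section
/- Let B be a symmetric positive definite q×q real matrix and C an invertible q×q real matrix. Then the 2q×2q real block matrix M = [[−B, −Cᵀ], [C, 0]] is Hurwitz: every eigenvalue μ ∈ ℂ of M (i.e., every root of its characteristic polynomial over ℂ) has strictly negative real part. (This is the system matrix of the primal-dual gradient dynamics for the quadratically regularized saddle-point problem underlying GTD2/GTD3, with B = Φᵀ D Φ and C = Φᵀ D (γP − I) Φ.) -/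
/-!
If `(x, y) ≠ 0` is an eigenvector of `[[-B, -Cᴴ], [C, 0]]` for `μ`, pairing the first block row
with `x` and the second with `y` gives `-x*Bx - conj(y*Cx) = μ‖x‖²` and `y*Cx = μ‖y‖²`. Taking
real parts, the coupling terms cancel: `Re μ · (‖x‖² + ‖y‖²) = -Re(x*Bx)`. Since `Cᴴ` is injective,
`x ≠ 0`, and `Re(x*Bx) > 0` because for a real `B` it is the sum of the quadratic forms of
`Re x` and `Im x`.
-/

open Matrix
open scoped ComplexOrder

theorem Matrix.exists_mulVec_eq_smul_of_isRoot_charpoly {n R : Type*} [Fintype n]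
    [DecidableEq n] [CommRing R] [IsDomain R] {A : Matrix n n R} {μ : R}
    (h : A.charpoly.IsRoot μ) :
    ∃ v ≠ 0, A *ᵥ v = μ • v := by
  rw [← charpoly_toLin', ← Module.End.hasEigenvalue_iff_isRoot_charpoly] at h
  obtain ⟨v, hv⟩ := h.exists_hasEigenvector
  exact ⟨v, hv.2, by simpa using Module.End.mem_eigenspace_iff.mp hv.1⟩

theorem Matrix.re_star_dotProduct_map_ofReal_mulVec {n : Type*} [Fintype n]
    (B : Matrix n n ℝ) (z : n → ℂ) :
    (star z ⬝ᵥ B.map (↑) *ᵥ z).re =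
      (fun i ↦ (z i).re) ⬝ᵥ B *ᵥ (fun i ↦ (z i).re) +
        (fun i ↦ (z i).im) ⬝ᵥ B *ᵥ (fun i ↦ (z i).im) := by
  simp only [dotProduct, mulVec, map_apply, Pi.star_apply, Finset.mul_sum, Complex.re_sum,
    ← Finset.sum_add_distrib]
  refine Finset.sum_congr rfl fun i _ ↦ Finset.sum_congr rfl fun j _ ↦ ?_
  simp [Complex.mul_re, Complex.mul_im]

theorem Matrix.re_star_dotProduct_map_ofReal_mulVec_pos {n : Type*} [Fintype n]
    {B : Matrix n n ℝ} (hB : ∀ x : n → ℝ, x ≠ 0 → 0 < x ⬝ᵥ B *ᵥ x) {z : n → ℂ} (hz : z ≠ 0) :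
    0 < (star z ⬝ᵥ B.map (↑) *ᵥ z).re := by
  have hB' : ∀ x : n → ℝ, 0 ≤ x ⬝ᵥ B *ᵥ x := fun x ↦ by
    rcases eq_or_ne x 0 with rfl | hx
    · simp
    · exact (hB x hx).le
  rw [re_star_dotProduct_map_ofReal_mulVec]
  by_cases hre : (fun i ↦ (z i).re) = 0
  · have him : (fun i ↦ (z i).im) ≠ 0 := fun him ↦
      hz (funext fun i ↦ Complex.ext (congrFun hre i) (congrFun him i))
    linarith [hB' (fun i ↦ (z i).re), hB _ him]
  · linarith [hB _ hre, hB' (fun i ↦ (z i).im)]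

theorem Matrix.star_dotProduct_conjTranspose_mulVec {m n : Type*} [Fintype m] [Fintype n]
    (C : Matrix n m ℂ) (x : m → ℂ) (y : n → ℂ) :
    star x ⬝ᵥ Cᴴ *ᵥ y = star (star y ⬝ᵥ C *ᵥ x) := by
  rw [dotProduct_mulVec, star_dotProduct, star_mulVec, star_star]

theorem re_lt_zero_of_saddlePoint_eigenvector {m n : Type*} [Fintype m] [Fintype n]
    {B : Matrix m m ℂ} {C : Matrix n m ℂ}
    (hB : ∀ x : m → ℂ, x ≠ 0 → 0 < (star x ⬝ᵥ B *ᵥ x).re)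
    {μ : ℂ} {x : m → ℂ} {y : n → ℂ} (hx : x ≠ 0)
    (h₁ : -(B *ᵥ x) - Cᴴ *ᵥ y = μ • x) (h₂ : C *ᵥ x = μ • y) :
    μ.re < 0 := by
  have e₁ : -(star x ⬝ᵥ B *ᵥ x) - star (star y ⬝ᵥ C *ᵥ x) = μ * (star x ⬝ᵥ x) := by
    rw [← star_dotProduct_conjTranspose_mulVec, ← dotProduct_neg, ← dotProduct_sub, h₁,
      dotProduct_smul, smul_eq_mul]
  have e₂ : star y ⬝ᵥ C *ᵥ x = μ * (star y ⬝ᵥ y) := by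
    rw [h₂, dotProduct_smul, smul_eq_mul]
  obtain ⟨hX, hX'⟩ := Complex.nonneg_iff.mp (dotProduct_star_self_nonneg x)
  obtain ⟨hY, hY'⟩ := Complex.nonneg_iff.mp (dotProduct_star_self_nonneg y)
  have key : μ.re * ((star x ⬝ᵥ x).re + (star y ⬝ᵥ y).re) = -(star x ⬝ᵥ B *ᵥ x).re := by
    have r₁ := congrArg Complex.re e₁
    have r₂ := congrArg Complex.re e₂
    simp only [Complex.sub_re, Complex.neg_re, Complex.star_def, Complex.conj_re,
      Complex.mul_re, ← hX', ← hY', mul_zero, sub_zero] at r₁ r₂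
    linarith
  by_contra! hμ
  nlinarith [hB x hx]

theorem Matrix.re_lt_zero_of_isRoot_charpoly_fromBlocks {m n : Type*} [Fintype m] [Fintype n]
    [DecidableEq m] [DecidableEq n] {B : Matrix m m ℂ} {C : Matrix n m ℂ}
    (hB : ∀ x : m → ℂ, x ≠ 0 → 0 < (star x ⬝ᵥ B *ᵥ x).re) (hC : Function.Injective Cᴴ.mulVec)
    {μ : ℂ} (hμ : (fromBlocks (-B) (-Cᴴ) C 0).charpoly.IsRoot μ) :
    μ.re < 0 := by
  obtain ⟨v, hv, hvμ⟩ := exists_mulVec_eq_smul_of_isRoot_charpoly hμ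
  obtain ⟨x, y, rfl⟩ : ∃ x y, v = Sum.elim x y := ⟨_, _, (Sum.elim_comp_inl_inr v).symm⟩
  rw [fromBlocks_mulVec] at hvμ
  have h₁ : -(B *ᵥ x) - Cᴴ *ᵥ y = μ • x := funext fun i ↦ by
    simpa [neg_mulVec, sub_eq_add_neg] using congrFun hvμ (.inl i)
  have h₂ : C *ᵥ x = μ • y := funext fun i ↦ by
    simpa using congrFun hvμ (.inr i)
  refine re_lt_zero_of_saddlePoint_eigenvector hB (fun hx ↦ hv ?_) h₁ h₂
  have hy : y = 0 := hC <| by simpa [hx] using h₁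
  rw [hx, hy, Sum.elim_zero_zero]

theorem stmt_18_general (q : ℕ)
    (B C : Matrix (Fin q) (Fin q) ℝ)
    (hBpos : ∀ x : Fin q → ℝ, x ≠ 0 → 0 < x ⬝ᵥ (B *ᵥ x))
    (hC : IsUnit C) :
    ∀ μ : ℂ,
      ((Matrix.fromBlocks (-B) (-Cᵀ) C 0).map (fun a : ℝ => (a : ℂ))).charpoly.IsRoot μ →
      μ.re < 0 := by
  intro μ hμ
  have hM : (fromBlocks (-B) (-Cᵀ) C 0).map ((↑) : ℝ → ℂ) =
      fromBlocks (-B.map (↑)) (-(C.map (↑))ᴴ) (C.map (↑)) 0 := by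
    ext (i | i) (j | j) <;> simp
  rw [hM] at hμ
  refine re_lt_zero_of_isRoot_charpoly_fromBlocks (fun x hx ↦ ?_) ?_ hμ
  · exact re_star_dotProduct_map_ofReal_mulVec_pos hBpos hx
  · exact mulVec_injective_iff_isUnit.mpr (hC.map Complex.ofRealHom.mapMatrix).star

/-- If `B` is symmetric positive definite and `C` is invertible, the block matrix
`M = [[−B, −Cᵀ], [C, 0]]` is Hurwitz: every complex eigenvalue (root of its
characteristic polynomial over `ℂ`) has strictly negative real part. -/
theorem stmt_18 (q : ℕ) (hq : 0 < q)
    (B C : Matrix (Fin q) (Fin q) ℝ)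
    (hBsymm : Bᵀ = B)
    (hBpos : ∀ x : Fin q → ℝ, x ≠ 0 → 0 < x ⬝ᵥ (B *ᵥ x))
    (hC : IsUnit C) :
    ∀ μ : ℂ,
      ((Matrix.fromBlocks (-B) (-Cᵀ) C 0).map (fun a : ℝ => (a : ℂ))).charpoly.IsRoot μ →
      μ.re < 0 :=
  stmt_18_general q B C hBpos hC
end
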